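/- arXiv:2103.13918 — 2 statements merged into one kernel-verified Lean document; each statement's English description precedes it below -/
import Mathlib

section
/- Let X be a finite type with n := Fintype.card X, and let Equiv.Perm X act on X × Set X by π • (w, S) = (π w, π '' S). Then for every pair (w, S), the orbit of (w, S) is finite of cardinality n * Nat.choose (n - 1) ((S \ {w}).ncard); moreover, for every fixed w₀ : X, the number of S' with (w₀, S') in this orbit equals Nat.choose (n - 1) ((S \ {w}).ncard), i.e., each prime orbit has an equal number of elements with any given first component. -/
/-- The action of prime substitutions on level-1 minterms `(w, S)`:
`π • (w, S) = (π w, π '' S)`. -/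
instance permProdSMul {X : Type*} : SMul (Equiv.Perm X) (X × Set X) :=
  ⟨fun π p => (π p.1, π '' p.2)⟩

instance permProdAction {X : Type*} : MulAction (Equiv.Perm X) (X × Set X) where
  one_smul p := by
    show ((1 : Equiv.Perm X) p.1, ⇑(1 : Equiv.Perm X) '' p.2) = p
    simp
  mul_smul π π' p := by
    show ((π * π') p.1, ⇑(π * π') '' p.2) = (π (π' p.1), ⇑π '' (⇑π' '' p.2))
    simp [Set.image_image]

section Aux

variable {X : Type*} [Fintype X]

private lemma permProd_smul_def (π : Equiv.Perm X) (p : X × Set X) :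
    π • p = (π p.1, π '' p.2) := rfl

private lemma swap_preimage_eq [DecidableEq X] (a b : X) (S : Set X)
    (h : (a ∈ S ∧ b ∈ S) ∨ (a ∉ S ∧ b ∉ S)) : Equiv.swap a b ⁻¹' S = S := by
  ext x
  rcases eq_or_ne x a with rfl | hxa
  · simp only [Set.mem_preimage, Equiv.swap_apply_left]
    tauto
  rcases eq_or_ne x b with rfl | hxb
  · simp only [Set.mem_preimage, Equiv.swap_apply_right]
    tauto
  · simp [Equiv.swap_apply_of_ne_of_ne hxa hxb]

private lemma mem_orbit_iff' (w w' : X) (S S' : Set X) :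
    (w', S') ∈ MulAction.orbit (Equiv.Perm X) (w, S) ↔
      ((w' ∈ S' ↔ w ∈ S) ∧ S'.ncard = S.ncard) := by
  classical
  constructor
  · rintro ⟨π, h⟩
    have h' : (π w, ⇑π '' S) = (w', S') := h
    obtain ⟨h1, h2⟩ := Prod.mk.injEq _ _ _ _ ▸ h'
    subst h1; subst h2
    exact ⟨(Function.Injective.mem_set_image π.injective), Set.ncard_image_of_injective S π.injective⟩
  · rintro ⟨hm, hc⟩
    have hcard : Fintype.card {x // x ∈ S} = Fintype.card {x // x ∈ S'} := by
      rw [← Nat.card_eq_fintype_card, ← Nat.card_eq_fintype_card,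
        Nat.card_coe_set_eq, Nat.card_coe_set_eq, hc]
    let e : {x // x ∈ S} ≃ {x // x ∈ S'} := Fintype.equivOfCardEq hcard
    let π₁ : Equiv.Perm X := Equiv.extendSubtype e
    have h₁ : π₁ '' S = S' := by
      ext y
      constructor
      · rintro ⟨x, hx, rfl⟩
        exact Equiv.extendSubtype_mem e x hx
      · intro hy
        refine ⟨π₁.symm y, ?_, Equiv.apply_symm_apply _ _⟩
        by_contra h
        have := Equiv.extendSubtype_not_mem e _ h
        rw [show Equiv.extendSubtype e (π₁.symm y) = y from Equiv.apply_symm_apply _ _] at this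
        exact this hy
    set g : Equiv.Perm X := π₁.trans (Equiv.swap (π₁ w) w') with hg
    refine ⟨g, ?_⟩
    have himg : Equiv.swap (π₁ w) w' '' S' = S' := by
      rw [Equiv.image_eq_preimage_symm, Equiv.symm_swap]
      apply swap_preimage_eq
      by_cases hw : w ∈ S
      · exact Or.inl ⟨h₁ ▸ Set.mem_image_of_mem _ hw, hm.mpr hw⟩
      · refine Or.inr ⟨fun ha => ?_, fun hw' => hw (hm.mp hw')⟩
        rw [← h₁] at ha
        exact hw ((Function.Injective.mem_set_image π₁.injective).mp ha)
    show (g w, ⇑g '' S) = (w', S')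
    refine Prod.ext ?_ ?_
    · show g w = w'
      rw [hg]
      simp [Equiv.swap_apply_left]
    · show ⇑g '' S = S'
      rw [hg, Equiv.coe_trans, Set.image_comp, h₁, himg]

private lemma count_notMem (a : X) (k : ℕ) :
    {S' : Set X | a ∉ S' ∧ S'.ncard = k}.ncard = (Fintype.card X - 1).choose k := by
  classical
  have himg : {S' : Set X | a ∉ S' ∧ S'.ncard = k}
      = (fun t : Finset X => (↑t : Set X)) ''
        ↑(Finset.powersetCard k (Finset.univ.erase a)) := by
    ext S'
    simp only [Set.mem_image, Finset.mem_coe, Finset.mem_powersetCard, Set.mem_setOf_eq]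
    constructor
    · rintro ⟨ha, hk⟩
      refine ⟨S'.toFinite.toFinset, ⟨?_, ?_⟩, S'.toFinite.coe_toFinset⟩
      · intro x hx
        rw [Set.Finite.mem_toFinset] at hx
        exact Finset.mem_erase.mpr ⟨fun h => ha (h ▸ hx), Finset.mem_univ x⟩
      · rw [← Set.ncard_eq_toFinset_card S' S'.toFinite]; exact hk
    · rintro ⟨t, ⟨hsub, hcard⟩, rfl⟩
      refine ⟨fun h => ?_, by simp [hcard]⟩
      have := Finset.mem_erase.mp (hsub h)
      exact this.1 rfl
  rw [himg, Set.ncard_image_of_injective _ Finset.coe_injective, Set.ncard_coe_finset,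
    Finset.card_powersetCard, Finset.card_erase_of_mem (Finset.mem_univ a), Finset.card_univ]

private lemma count_mem (a : X) (k : ℕ) :
    {S' : Set X | a ∈ S' ∧ S'.ncard = k + 1}.ncard = (Fintype.card X - 1).choose k := by
  classical
  have himg : {S' : Set X | a ∈ S' ∧ S'.ncard = k + 1}
      = (fun t : Finset X => insert a (↑t : Set X)) ''
        ↑(Finset.powersetCard k (Finset.univ.erase a)) := by
    ext S'
    simp only [Set.mem_image, Finset.mem_coe, Finset.mem_powersetCard, Set.mem_setOf_eq]
    constructor
    · rintro ⟨ha, hk⟩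
      refine ⟨(S' \ {a}).toFinite.toFinset, ⟨?_, ?_⟩, ?_⟩
      · intro x hx
        rw [Set.Finite.mem_toFinset] at hx
        exact Finset.mem_erase.mpr ⟨hx.2, Finset.mem_univ x⟩
      · rw [← Set.ncard_eq_toFinset_card _ (S' \ {a}).toFinite,
          Set.ncard_diff_singleton_of_mem ha, hk]
        rfl
      · rw [Set.Finite.coe_toFinset, Set.insert_diff_singleton, Set.insert_eq_of_mem ha]
    · rintro ⟨t, ⟨hsub, hcard⟩, rfl⟩
      have hat : a ∉ (↑t : Set X) := by
        intro h
        exact (Finset.mem_erase.mp (hsub h)).1 rfl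
      refine ⟨Set.mem_insert _ _, ?_⟩
      rw [Set.ncard_insert_of_notMem hat (Set.toFinite _), Set.ncard_coe_finset, hcard]
  have hinj : Set.InjOn (fun t : Finset X => insert a (↑t : Set X))
      ↑(Finset.powersetCard k (Finset.univ.erase a)) := by
    intro t₁ h₁ t₂ h₂ h
    have hat : ∀ t ∈ Finset.powersetCard k (Finset.univ.erase a), a ∉ (↑t : Set X) := by
      intro t ht hmem
      exact (Finset.mem_erase.mp ((Finset.mem_powersetCard.mp ht).1 hmem)).1 rfl
    have h' : insert a (↑t₁ : Set X) = insert a ↑t₂ := h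
    have : insert a (↑t₁ : Set X) \ {a} = insert a (↑t₂ : Set X) \ {a} := by rw [h']
    rw [Set.insert_diff_self_of_notMem (hat t₁ h₁),
      Set.insert_diff_self_of_notMem (hat t₂ h₂)] at this
    exact_mod_cast Finset.coe_injective this
  rw [himg, Set.ncard_image_of_injOn hinj, Set.ncard_coe_finset,
    Finset.card_powersetCard, Finset.card_erase_of_mem (Finset.mem_univ a), Finset.card_univ]

private lemma section_count (w w₀ : X) (S : Set X) :
    {S' : Set X | (w₀, S') ∈ MulAction.orbit (Equiv.Perm X) (w, S)}.ncard
      = (Fintype.card X - 1).choose ((S \ {w}).ncard) := by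
  classical
  by_cases hw : w ∈ S
  · have hS : S.ncard = (S \ {w}).ncard + 1 := (Set.ncard_diff_singleton_add_one hw).symm
    have hset : {S' : Set X | (w₀, S') ∈ MulAction.orbit (Equiv.Perm X) (w, S)}
        = {S' : Set X | w₀ ∈ S' ∧ S'.ncard = (S \ {w}).ncard + 1} := by
      ext S'
      rw [Set.mem_setOf_eq, mem_orbit_iff', Set.mem_setOf_eq, hS]
      constructor
      · rintro ⟨h1, h2⟩; exact ⟨h1.mpr hw, h2⟩
      · rintro ⟨h1, h2⟩; exact ⟨⟨fun _ => hw, fun _ => h1⟩, h2⟩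
    rw [hset]
    exact count_mem w₀ _
  · have hS : S \ {w} = S := Set.diff_singleton_eq_self hw
    have hset : {S' : Set X | (w₀, S') ∈ MulAction.orbit (Equiv.Perm X) (w, S)}
        = {S' : Set X | w₀ ∉ S' ∧ S'.ncard = (S \ {w}).ncard} := by
      ext S'
      rw [Set.mem_setOf_eq, mem_orbit_iff', Set.mem_setOf_eq, hS]
      constructor
      · rintro ⟨h1, h2⟩; exact ⟨fun h => hw (h1.mp h), h2⟩
      · rintro ⟨h1, h2⟩; exact ⟨⟨fun h => absurd h h1, fun h => absurd h hw⟩, h2⟩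
    rw [hset]
    exact count_notMem w₀ _

end Aux

/-- Every prime orbit of level-1 minterms is finite of cardinality
`n * (n-1).choose ((S \ {w}).ncard)`, and it has an equal number
`(n-1).choose ((S \ {w}).ncard)` of elements in each minmatrix section, i.e.
with any given first component `w₀`. -/
theorem orbit_ncard_and_section_count {X : Type*} [Fintype X] (w : X) (S : Set X) :
    (MulAction.orbit (Equiv.Perm X) (w, S)).Finite ∧
    (MulAction.orbit (Equiv.Perm X) (w, S)).ncard
      = Fintype.card X * Nat.choose (Fintype.card X - 1) ((S \ {w}).ncard) ∧
    (∀ w₀ : X,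
      {S' : Set X | (w₀, S') ∈ MulAction.orbit (Equiv.Perm X) (w, S)}.ncard
        = Nat.choose (Fintype.card X - 1) ((S \ {w}).ncard)) := by
  classical
  refine ⟨Set.toFinite _, ?_, fun w₀ => section_count w w₀ S⟩
  set c := Nat.choose (Fintype.card X - 1) ((S \ {w}).ncard) with hc
  let sect : X → Set (Set X) :=
    fun w₀ => {S' : Set X | (w₀, S') ∈ MulAction.orbit (Equiv.Perm X) (w, S)}
  let e : ↥(MulAction.orbit (Equiv.Perm X) (w, S)) ≃ (w₀ : X) × ↥(sect w₀) :=
    { toFun := fun p => ⟨p.1.1, p.1.2, p.2⟩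
      invFun := fun x => ⟨(x.1, x.2.1), x.2.2⟩
      left_inv := fun p => rfl
      right_inv := fun x => rfl }
  have hcongr := Nat.card_congr e
  rw [Nat.card_coe_set_eq] at hcongr
  haveI : ∀ w₀ : X, Fintype ↥(sect w₀) := fun w₀ => Fintype.ofFinite _
  rw [Nat.card_eq_fintype_card, Fintype.card_sigma] at hcongr
  have hfib : ∀ w₀ : X, Fintype.card ↥(sect w₀) = c := by
    intro w₀
    rw [← Nat.card_eq_fintype_card, Nat.card_coe_set_eq]
    exact section_count w w₀ S
  rw [hcongr]
  simp only [hfib, Finset.sum_const, smul_eq_mul, Finset.card_univ]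
end

section
/- Fix v ≥ 1, let X := Fin v → Bool, n := 2^v, and let t ∈ X be the all-true valuation. Let (W, R) be a Kripke frame and let x, y : ℕ with x ≤ n - 1, y ≤ n - 1 and x ≤ y. Then the following are equivalent: (i) for every valuation assignment V : W → X and every world w : W with V w = t, either (t ∉ img(V,w) and img(V,w).ncard ≤ x) or (t ∈ img(V,w) and img(V,w).ncard ≤ y) — i.e., the non-iterative K-plane axiom α_K(x,y) is valid on the frame; (ii) every world w satisfies: (¬R w w, and sees(w) is finite with sees(w).ncard ≤ x) or (R w w, and others(w) is finite with others(w).ncard + 1 ≤ y). -/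
/-!
A reflexive world `w` with `V w = t` sees the value `t`, so there the axiom caps the number of
values seen by `y`; at an irreflexive world the cap is `x` as long as `V` avoids `t` on the
successors. Valuations that are injective on a large enough finite set of successors, with values
other than `t` where possible, show that the frame condition is necessary; `y < 2 ^ v` leaves
enough values. Conversely the frame condition bounds the image of every valuation, with `x ≤ y`
covering irreflexive worlds that see `t`.
-/

open Set

section KPlane

variable {W X : Type*}

def KPlaneAxiomHolds (R : W → W → Prop) (t : X) (x y : ℕ) (V : W → X) (w : W) : Prop :=
  V w = t →
    (t ∉ V '' {w' | R w w'} ∧ (V '' {w' | R w w'}).ncard ≤ x) ∨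
      (t ∈ V '' {w' | R w w'} ∧ (V '' {w' | R w w'}).ncard ≤ y)

def KPlaneFrameCondition (R : W → W → Prop) (x y : ℕ) (w : W) : Prop :=
  (¬ R w w ∧ {w' | R w w'}.Finite ∧ {w' | R w w'}.ncard ≤ x) ∨
    (R w w ∧ {w' | R w w' ∧ w' ≠ w}.Finite ∧ {w' | R w w' ∧ w' ≠ w}.ncard + 1 ≤ y)

theorem Set.exists_finite_subset_ncard_eq {S : Set W} {k : ℕ} (h : S.Finite → k ≤ S.ncard) :
    ∃ T ⊆ S, T.Finite ∧ T.ncard = k := by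
  by_cases hS : S.Finite
  · obtain ⟨T, hTS, hT⟩ := exists_subset_card_eq (h hS)
    exact ⟨T, hTS, hS.subset hTS, hT⟩
  · exact Infinite.exists_subset_ncard_eq hS k

theorem Set.Finite.exists_injOn_image_subset_apply_eq [Finite X] {T : Set W} {A : Set X} {w : W}
    (hT : T.Finite) (hw : w ∉ T) (hTA : T.ncard ≤ A.ncard) (t : X) :
    ∃ V : W → X, V w = t ∧ InjOn V T ∧ V '' T ⊆ A := by
  classical
  have : Nonempty X := ⟨t⟩
  obtain ⟨f, hfA, hf⟩ := hT.exists_injOn_of_encard_le (β := X) (t := A) <| by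
    rwa [← hT.cast_ncard_eq, ← A.toFinite.cast_ncard_eq, Nat.cast_le]
  have hVf : EqOn (Function.update f w t) f T := fun z hz =>
    Function.update_of_ne (ne_of_mem_of_not_mem hz hw) _ _
  exact ⟨Function.update f w t, Function.update_self .., hf.congr hVf.symm,
    (image_congr hVf).trans_subset (image_subset_iff.mpr hfA)⟩

theorem Set.ncard_compl_singleton [Finite X] (t : X) : ({t}ᶜ : Set X).ncard = Nat.card X - 1 := by
  rw [ncard_compl, ncard_singleton]

variable {R : W → W → Prop} {x y : ℕ} {w : W}

theorem KPlaneFrameCondition.kPlaneAxiomHolds (hxy : x ≤ y) (h : KPlaneFrameCondition R x y w)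
    (t : X) (V : W → X) : KPlaneAxiomHolds R t x y V w := by
  intro hVw
  rcases h with ⟨-, hfin, hcard⟩ | ⟨hR, hfin, hcard⟩
  · have himg := (ncard_image_le (f := V) hfin).trans hcard
    by_cases ht : t ∈ V '' {w' | R w w'}
    · exact .inr ⟨ht, himg.trans hxy⟩
    · exact .inl ⟨ht, himg⟩
  · have hsees : {w' | R w w'} = insert w {w' | R w w' ∧ w' ≠ w} := by
      ext a
      by_cases ha : a = w <;> simp [ha, hR]
    refine .inr ⟨⟨w, hR, hVw⟩, ?_⟩
    calc (V '' {w' | R w w'}).ncard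
        = (insert (V w) (V '' {w' | R w w' ∧ w' ≠ w})).ncard := by rw [hsees, image_insert_eq]
      _ ≤ (V '' {w' | R w w' ∧ w' ≠ w}).ncard + 1 := ncard_insert_le _ _
      _ ≤ {w' | R w w' ∧ w' ≠ w}.ncard + 1 := Nat.add_le_add_right (ncard_image_le hfin) 1
      _ ≤ y := hcard

theorem not_kPlaneAxiomHolds_of_lt_ncard (hxy : x ≤ y) {t : X} {V : W → X} (hVw : V w = t)
    (h : y < (V '' {w' | R w w'}).ncard) : ¬ KPlaneAxiomHolds R t x y V w := by
  intro hax
  rcases hax hVw with ⟨-, hle⟩ | ⟨-, hle⟩ <;> omega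

theorem exists_not_kPlaneAxiomHolds_of_refl [Finite X] (t : X) (hy : y < Nat.card X) (hR : R w w)
    (h : ¬ ({w' | R w w' ∧ w' ≠ w}.Finite ∧ {w' | R w w' ∧ w' ≠ w}.ncard + 1 ≤ y)) :
    ∃ V : W → X, ¬ KPlaneAxiomHolds R t x y V w := by
  obtain ⟨T, hTS, hT, rfl⟩ := exists_finite_subset_ncard_eq (k := y) fun hfin => by
    have := not_and.mp h hfin
    omega
  obtain ⟨V, hVw, hinj, hVT⟩ := hT.exists_injOn_image_subset_apply_eq (fun hw => (hTS hw).2 rfl)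
    (A := {t}ᶜ) (by rw [ncard_compl_singleton]; omega) t
  have hsub : insert t (V '' T) ⊆ V '' {w' | R w w'} := by
    rintro _ (rfl | ⟨z, hz, rfl⟩)
    exacts [⟨w, hR, hVw⟩, ⟨z, (hTS hz).1, rfl⟩]
  have hcard : (insert t (V '' T)).ncard = T.ncard + 1 := by
    rw [ncard_insert_of_notMem (fun ht => hVT ht rfl), hinj.ncard_image]
  refine ⟨V, fun hax => ?_⟩
  rcases hax hVw with ⟨hnot, -⟩ | ⟨-, hle⟩
  · exact hnot (hsub (mem_insert t _))
  · have := ncard_le_ncard hsub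
    omega

theorem exists_not_kPlaneAxiomHolds_of_irrefl [Finite X] (t : X) (hy : y < Nat.card X)
    (hxy : x ≤ y) (hR : ¬ R w w) (h : ¬ ({w' | R w w'}.Finite ∧ {w' | R w w'}.ncard ≤ x)) :
    ∃ V : W → X, ¬ KPlaneAxiomHolds R t x y V w := by
  by_cases hsmall : {w' | R w w'}.Finite ∧ {w' | R w w'}.ncard ≤ y
  · obtain ⟨hfin, hle⟩ := hsmall
    obtain ⟨V, hVw, hinj, hVS⟩ := hfin.exists_injOn_image_subset_apply_eq hR (A := {t}ᶜ)
      (by rw [ncard_compl_singleton]; omega) t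
    have hx := not_and.mp h hfin
    refine ⟨V, fun hax => ?_⟩
    rcases hax hVw with ⟨-, hle'⟩ | ⟨ht, -⟩
    · rw [hinj.ncard_image] at hle'
      omega
    · exact hVS ht rfl
  · obtain ⟨T, hTS, hT, hTcard⟩ := exists_finite_subset_ncard_eq (k := y + 1) fun hfin => by
      have := not_and.mp hsmall hfin
      omega
    obtain ⟨V, hVw, hinj, -⟩ := hT.exists_injOn_image_subset_apply_eq (fun hw => hR (hTS hw))
      (A := univ) (by rw [ncard_univ]; omega) t
    refine ⟨V, not_kPlaneAxiomHolds_of_lt_ncard hxy hVw ?_⟩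
    have := ncard_le_ncard (image_mono (f := V) hTS)
    rw [hinj.ncard_image] at this
    omega

theorem kPlaneAxiomHolds_iff_kPlaneFrameCondition [Finite X] (t : X) (hy : y < Nat.card X)
    (hxy : x ≤ y) :
    (∀ V : W → X, KPlaneAxiomHolds R t x y V w) ↔ KPlaneFrameCondition R x y w := by
  refine ⟨fun hval => ?_, fun h => h.kPlaneAxiomHolds hxy t⟩
  by_contra h
  obtain ⟨V, hV⟩ : ∃ V : W → X, ¬ KPlaneAxiomHolds R t x y V w := by
    by_cases hR : R w w
    · exact exists_not_kPlaneAxiomHolds_of_refl t hy hR fun h' => h (.inr ⟨hR, h'⟩)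
    · exact exists_not_kPlaneAxiomHolds_of_irrefl t hy hxy hR fun h' => h (.inl ⟨hR, h'⟩)
  exact hV (hval V)

end KPlane

theorem alphaK_valid_iff_frame_condition_general (v : ℕ) {W : Type*}
    (R : W → W → Prop) (x y : ℕ)
    (hy : y ≤ 2 ^ v - 1) (hxy : x ≤ y) :
    (∀ (V : W → (Fin v → Bool)) (w : W), V w = (fun _ => true) →
      ((fun _ => true : Fin v → Bool) ∉ V '' {w' | R w w'} ∧
        (V '' {w' | R w w'}).ncard ≤ x) ∨
      ((fun _ => true : Fin v → Bool) ∈ V '' {w' | R w w'} ∧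
        (V '' {w' | R w w'}).ncard ≤ y)) ↔
    (∀ w : W,
      (¬ R w w ∧ {w' | R w w'}.Finite ∧ {w' | R w w'}.ncard ≤ x) ∨
      (R w w ∧ {w' | R w w' ∧ w' ≠ w}.Finite ∧
        {w' | R w w' ∧ w' ≠ w}.ncard + 1 ≤ y)) := by
  have hcard : y < Nat.card (Fin v → Bool) := by
    simp only [Nat.card_eq_fintype_card, Fintype.card_fun, Fintype.card_bool, Fintype.card_fin]
    have := Nat.one_le_two_pow (n := v)
    omega
  exact forall_comm.trans <| forall_congr' fun w =>
    kPlaneAxiomHolds_iff_kPlaneFrameCondition (R := R) (w := w) _ hcard hxy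

/-- Frame correspondence for the K-plane axiom `α_K(x,y)`: it is valid on a
Kripke frame `(W, R)` iff every world `w` either is irreflexive and sees at
most `x` worlds, or is reflexive and sees at most `y` worlds in total
(itself plus at most `y - 1` others). Here `t = (fun _ => true)` is the
all-true valuation, `img(V,w) = V '' {w' | R w w'}`, and `x ≤ y ≤ 2^v - 1`. -/
theorem alphaK_valid_iff_frame_condition (v : ℕ) (hv : 1 ≤ v) {W : Type*}
    (R : W → W → Prop) (x y : ℕ)
    (hx : x ≤ 2 ^ v - 1) (hy : y ≤ 2 ^ v - 1) (hxy : x ≤ y) :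
    (∀ (V : W → (Fin v → Bool)) (w : W), V w = (fun _ => true) →
      ((fun _ => true : Fin v → Bool) ∉ V '' {w' | R w w'} ∧
        (V '' {w' | R w w'}).ncard ≤ x) ∨
      ((fun _ => true : Fin v → Bool) ∈ V '' {w' | R w w'} ∧
        (V '' {w' | R w w'}).ncard ≤ y)) ↔
    (∀ w : W,
      (¬ R w w ∧ {w' | R w w'}.Finite ∧ {w' | R w w'}.ncard ≤ x) ∨
      (R w w ∧ {w' | R w w' ∧ w' ≠ w}.Finite ∧
        {w' | R w w' ∧ w' ≠ w}.ncard + 1 ≤ y)) :=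
  alphaK_valid_iff_frame_condition_general v R x y hy hxy
end
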